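/- arXiv:math/9903113 — 5 statements merged into one kernel-verified Lean document; each statement's English description precedes it below -/
import Mathlib

section
/- Suppose a rational function α over a field F satisfies α(x)α(y) = α(x/y)α(y) + α(x)α(y/x) (as rational functions in x, y) and α is not identically zero. Then α has no nonzero root: if α(d) = 0 for some d ≠ 0 in F (at which α is defined), then contradiction follows from α(d/y)α(y) = 0 as a rational function in y. -/
noncomputable section

/-- Substitution of α ∈ F(x) at an element t of F(x,y) = RatFunc (RatFunc F). -/
def sub {F : Type*} [Field F] (a : RatFunc F) (t : RatFunc (RatFunc F)) : RatFunc (RatFunc F) :=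
  RatFunc.eval ((RatFunc.C).comp (RatFunc.C)) t a

/-!
Substituting `x = d` in the functional equation would give `0 = α(d/y) α(y)` in `F(y)`, which is
absurd since both factors are nonzero. Substitution is not a ring map on `F(x, y)`, so with
`α = p / q` and `m ≥ deg p, deg q` the equation is first multiplied by
`q(x) q(y) · q(x/y) y^m · q(y/x) x^m`. This turns it into an identity in `F[x][y]`, where `x ↦ d`
is a ring map; the homogenizations `q(x/y) y^m` and `q(y/x) x^m` stay nonzero under it because
`d ≠ 0`.
-/

open Polynomial Finset

namespace Polynomial

variable {R S : Type*} [CommSemiring R] [CommSemiring S]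

theorem eval₂_homogenize (φ : R →+* S) (p : R[X]) (m : ℕ) (u v : S) :
    MvPolynomial.eval₂ φ ![u, v] (p.homogenize m)
      = ∑ i ∈ range (m + 1), φ (p.coeff i) * u ^ i * v ^ (m - i) := by
  simp [homogenize, MvPolynomial.eval₂_monomial, Finset.Nat.sum_antidiagonal_eq_sum_range_succ_mk,
    mul_assoc]

theorem eval₂_homogenize_of_ne_zero {K : Type*} [Field K] (φ : R →+* K) {p : R[X]} {m : ℕ}
    (hp : p.natDegree ≤ m) (u : K) {v : K} (hv : v ≠ 0) :
    MvPolynomial.eval₂ φ ![u, v] (p.homogenize m) = p.eval₂ φ (u / v) * v ^ m := by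
  rw [MvPolynomial.eval₂_eq_eval_map, ← homogenize_map,
    eval_homogenize ((natDegree_map_le).trans hp) _ (by simpa using hv), eval_map]
  simp

theorem map_eval₂_homogenize {T : Type*} [CommSemiring T] (f : S →+* T) (φ : R →+* S)
    (p : R[X]) (m : ℕ) (u v : S) :
    f (MvPolynomial.eval₂ φ ![u, v] (p.homogenize m))
      = MvPolynomial.eval₂ (f.comp φ) ![f u, f v] (p.homogenize m) := by
  rw [MvPolynomial.eval₂_comp_left]
  congr
  ext i
  fin_cases i <;> rfl

theorem coeff_eval₂_homogenize_C_X (p : R[X]) (c : R) {m i : ℕ} (hi : i ≤ m) :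
    (MvPolynomial.eval₂ C ![C c, X] (p.homogenize m)).coeff (m - i) = p.coeff i * c ^ i := by
  rw [eval₂_homogenize, finsetSum_coeff, sum_eq_single i]
  · rw [← C_pow, ← C_mul, coeff_C_mul_X_pow, if_pos rfl]
  · intro j hj hji
    rw [← C_pow, ← C_mul, coeff_C_mul_X_pow, if_neg]
    have hjm := mem_range.1 hj
    omega
  · exact fun h => absurd (mem_range.2 (Nat.lt_succ_of_le hi)) h

theorem coeff_eval₂_homogenize_X_C (p : R[X]) (c : R) {m i : ℕ} (hi : i ≤ m) :
    (MvPolynomial.eval₂ C ![X, C c] (p.homogenize m)).coeff i = p.coeff i * c ^ (m - i) := by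
  rw [eval₂_homogenize, finsetSum_coeff, sum_eq_single i]
  · rw [mul_right_comm, ← C_pow, ← C_mul, coeff_C_mul_X_pow, if_pos rfl]
  · intro j _ hji
    rw [mul_right_comm, ← C_pow, ← C_mul, coeff_C_mul_X_pow, if_neg (Ne.symm hji)]
  · exact fun h => absurd (mem_range.2 (Nat.lt_succ_of_le hi)) h

section NoZeroDivisors

variable [NoZeroDivisors R] {p : R[X]} {c : R} {m : ℕ}

theorem eval₂_homogenize_C_X_ne_zero (hp : p ≠ 0) (hc : c ≠ 0) (hm : p.natDegree ≤ m) :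
    MvPolynomial.eval₂ C ![C c, X] (p.homogenize m) ≠ 0 := fun h => by
  simpa [h, hp, pow_ne_zero _ hc] using coeff_eval₂_homogenize_C_X p c hm

theorem eval₂_homogenize_X_C_ne_zero (hp : p ≠ 0) (hc : c ≠ 0) (hm : p.natDegree ≤ m) :
    MvPolynomial.eval₂ C ![X, C c] (p.homogenize m) ≠ 0 := fun h => by
  simpa [h, hp, pow_ne_zero _ hc] using coeff_eval₂_homogenize_X_C p c hm

end NoZeroDivisors

end Polynomial

section ClearedFunEq

variable {R S T : Type*} [CommSemiring R] [CommRing S] [CommRing T]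

/-- The functional equation `f(u) f(v) = f(u/v) f(v) + f(u) f(v/u)` for `f = p / q`, written as
`LHS - RHS = 0` and multiplied by `q(u) q(v) · q(u/v) v^m · q(v/u) u^m`, which makes it polynomial
in `u` and `v`. -/
def clearedFunEq (φ : R →+* S) (p q : R[X]) (m : ℕ) (u v : S) : S :=
  p.eval₂ φ u * p.eval₂ φ v * MvPolynomial.eval₂ φ ![u, v] (q.homogenize m)
      * MvPolynomial.eval₂ φ ![v, u] (q.homogenize m)
    - (MvPolynomial.eval₂ φ ![u, v] (p.homogenize m) * p.eval₂ φ v * q.eval₂ φ u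
        * MvPolynomial.eval₂ φ ![v, u] (q.homogenize m)
      + p.eval₂ φ u * MvPolynomial.eval₂ φ ![v, u] (p.homogenize m) * q.eval₂ φ v
        * MvPolynomial.eval₂ φ ![u, v] (q.homogenize m))

theorem map_clearedFunEq (f : S →+* T) (φ : R →+* S) (p q : R[X]) (m : ℕ) (u v : S) :
    f (clearedFunEq φ p q m u v) = clearedFunEq (f.comp φ) p q m (f u) (f v) := by
  simp [clearedFunEq, hom_eval₂, map_eval₂_homogenize]

theorem clearedFunEq_eq_zero {K : Type*} [Field K] (φ : R →+* K) {p q : R[X]} {m : ℕ}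
    (hp : p.natDegree ≤ m) (hq : q.natDegree ≤ m) {u v : K} (hu : u ≠ 0) (hv : v ≠ 0)
    (hqu : q.eval₂ φ u ≠ 0) (hqv : q.eval₂ φ v ≠ 0)
    (hquv : MvPolynomial.eval₂ φ ![u, v] (q.homogenize m) ≠ 0)
    (hqvu : MvPolynomial.eval₂ φ ![v, u] (q.homogenize m) ≠ 0)
    (h : p.eval₂ φ u / q.eval₂ φ u * (p.eval₂ φ v / q.eval₂ φ v)
      = p.eval₂ φ (u / v) / q.eval₂ φ (u / v) * (p.eval₂ φ v / q.eval₂ φ v)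
        + p.eval₂ φ u / q.eval₂ φ u * (p.eval₂ φ (v / u) / q.eval₂ φ (v / u))) :
    clearedFunEq φ p q m u v = 0 := by
  rw [eval₂_homogenize_of_ne_zero φ hq _ hv] at hquv
  rw [eval₂_homogenize_of_ne_zero φ hq _ hu] at hqvu
  have hq_uv := left_ne_zero_of_mul hquv
  have hq_vu := left_ne_zero_of_mul hqvu
  rw [clearedFunEq, eval₂_homogenize_of_ne_zero φ hq _ hv, eval₂_homogenize_of_ne_zero φ hq _ hu,
    eval₂_homogenize_of_ne_zero φ hp _ hv, eval₂_homogenize_of_ne_zero φ hp _ hu]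
  field_simp at h
  linear_combination (u ^ m * v ^ m) * h

end ClearedFunEq

section Specialization

variable {R : Type*} [CommRing R]

theorem map_evalRingHom_clearedFunEq (c : R) (p q : R[X]) (m : ℕ) :
    mapRingHom (evalRingHom c) (clearedFunEq (C.comp C) p q m (C X) X)
      = clearedFunEq C p q m (C c) X := by
  have hCC : (mapRingHom (evalRingHom c)).comp (C.comp C) = C := by ext; simp
  rw [map_clearedFunEq, hCC, coe_mapRingHom, map_C, map_X, coe_evalRingHom, eval_X]

theorem clearedFunEq_C_X_ne_zero [IsDomain R] {p q : R[X]} {m : ℕ}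
    (hp0 : p ≠ 0) (hq0 : q ≠ 0) (hp : p.natDegree ≤ m) (hq : q.natDegree ≤ m) {c : R}
    (hc : c ≠ 0) (hpc : p.eval c = 0) (hqc : q.eval c ≠ 0) :
    clearedFunEq C p q m (C c) X ≠ 0 := by
  -- at a root `c` of `p` only the term `α(c/y) α(y)` survives, times nonzero factors
  simp only [clearedFunEq, eval₂_hom, eval₂_C_X, hpc, C_0, zero_mul, zero_sub, add_zero,
    neg_ne_zero]
  exact mul_ne_zero (mul_ne_zero (mul_ne_zero (eval₂_homogenize_C_X_ne_zero hp0 hc hp) hp0)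
    (C_ne_zero.2 hqc)) (eval₂_homogenize_X_C_ne_zero hq0 hc hq)

end Specialization

section Bivariate

variable (F : Type*) [Field F]

def bivariateToRatFunc : F[X][X] →+* RatFunc (RatFunc F) :=
  (algebraMap (RatFunc F)[X] (RatFunc (RatFunc F))).comp
    (mapRingHom (algebraMap F[X] (RatFunc F)))

variable {F}

theorem bivariateToRatFunc_injective : Function.Injective (bivariateToRatFunc F) :=
  (RatFunc.algebraMap_injective _).comp (map_injective _ (RatFunc.algebraMap_injective F))

theorem bivariateToRatFunc_comp_C_C :
    (bivariateToRatFunc F).comp (C.comp C) = (RatFunc.C : RatFunc F →+* _).comp RatFunc.C := by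
  ext a
  simp [bivariateToRatFunc, RatFunc.algebraMap_C]

theorem bivariateToRatFunc_C_X :
    bivariateToRatFunc F (C X) = RatFunc.C (RatFunc.X : RatFunc F) := by
  simp [bivariateToRatFunc, RatFunc.algebraMap_C, RatFunc.algebraMap_X]

theorem bivariateToRatFunc_X : bivariateToRatFunc F X = RatFunc.X := by
  simp [bivariateToRatFunc, RatFunc.algebraMap_X]

theorem clearedFunEq_C_comp_C_eq_zero {α : RatFunc F} {m : ℕ} (hp : α.num.natDegree ≤ m)
    (hq : α.denom.natDegree ≤ m)
    (hfe : let x : RatFunc (RatFunc F) := RatFunc.C RatFunc.X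
      let y : RatFunc (RatFunc F) := RatFunc.X
      sub α x * sub α y = sub α (x / y) * sub α y + sub α x * sub α (y / x)) :
    clearedFunEq (C.comp C) α.num α.denom m (C X) X = 0 := by
  have hq0 : α.denom.map C ≠ 0 := (Polynomial.map_ne_zero_iff C_injective).2 α.denom_ne_zero
  have hqm : (α.denom.map C).natDegree ≤ m := by rwa [natDegree_map]
  have hι {t : F[X][X]} : t ≠ 0 → bivariateToRatFunc F t ≠ 0 :=
    (map_ne_zero_iff _ bivariateToRatFunc_injective).2
  apply bivariateToRatFunc_injective
  rw [map_clearedFunEq, map_zero]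
  refine clearedFunEq_eq_zero _ hp hq (hι (C_ne_zero.2 X_ne_zero)) (hι X_ne_zero) ?_ ?_ ?_ ?_ ?_
  · rw [← hom_eval₂, ← hom_eval₂, eval₂_C_X]
    exact hι (C_ne_zero.2 α.denom_ne_zero)
  · rw [← hom_eval₂, ← eval₂_map, eval₂_C_X]
    exact hι hq0
  · rw [← map_eval₂_homogenize, ← MvPolynomial.eval₂_map, ← homogenize_map]
    exact hι (eval₂_homogenize_C_X_ne_zero hq0 X_ne_zero hqm)
  · rw [← map_eval₂_homogenize, ← MvPolynomial.eval₂_map, ← homogenize_map]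
    exact hι (eval₂_homogenize_X_C_ne_zero hq0 X_ne_zero hqm)
  · simpa only [bivariateToRatFunc_comp_C_C, bivariateToRatFunc_C_X, bivariateToRatFunc_X, sub,
      RatFunc.eval] using hfe

end Bivariate

/-- If a nonzero rational function α satisfies α(x)α(y) = α(x/y)α(y) + α(x)α(y/x)
(as an identity in F(x,y)), then α has no nonzero root: for d ≠ 0 at which α is defined,
α(d) ≠ 0. -/
theorem alpha_no_nonzero_root (F : Type*) [Field F] (α : RatFunc F) (hα : α ≠ 0)
    (hfe :
      let x : RatFunc (RatFunc F) := RatFunc.C RatFunc.X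
      let y : RatFunc (RatFunc F) := RatFunc.X
      sub α x * sub α y = sub α (x / y) * sub α y + sub α x * sub α (y / x))
    (d : F) (hd : d ≠ 0) (hdef : Polynomial.eval d α.denom ≠ 0) :
    RatFunc.eval (RingHom.id F) d α ≠ 0 := by
  intro hroot
  have hpd : α.num.eval d = 0 := (div_eq_zero_iff.1 hroot).resolve_right hdef
  have hp : α.num.natDegree ≤ max α.num.natDegree α.denom.natDegree := le_max_left _ _
  have hq : α.denom.natDegree ≤ max α.num.natDegree α.denom.natDegree := le_max_right _ _
  have key := congrArg (mapRingHom (evalRingHom d)) (clearedFunEq_C_comp_C_eq_zero hp hq hfe)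
  rw [map_evalRingHom_clearedFunEq, map_zero] at key
  exact clearedFunEq_C_X_ne_zero (RatFunc.num_ne_zero hα) α.denom_ne_zero hp hq hd hpd hdef key
end
end

section
/- With α(x) = c/(1−x) and β(x) = b − α(x) for scalars b, c ∈ F, the identity α(x/y)²α(y) + β(x/y)α(x)β(y/x) = α(y)²α(x/y) + β(y)α(x)β(1/y) holds as rational functions in x and y. -/
/-! Writing `1 - x/y = (y - x)/y`, `1 - y/x = (x - y)/x` and `1 - 1/y = (y - 1)/y`, the identity
holds in any field as soon as `x`, `y`, `1 - x`, `1 - y` and `x - y` are nonzero: clearing these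
denominators leaves a polynomial identity. In `F(x,y)` these hold because `y` is transcendental
over `F(x)` and `x` is transcendental over `F`. -/

open RatFunc

theorem RatFunc.X_ne_C {K : Type*} [CommRing K] [IsDomain K] (r : K) : (X : RatFunc K) ≠ C r :=
  fun h => transcendental_X (h ▸ isAlgebraic_algebraMap r)

theorem RatFunc.X_ne_one {K : Type*} [CommRing K] [IsDomain K] : (X : RatFunc K) ≠ 1 := by
  simpa using X_ne_C (1 : K)

theorem ybe_identity {K : Type*} [Field K] (b c x y : K) (hx : x ≠ 0) (hy : y ≠ 0)
    (hx1 : x ≠ 1) (hy1 : y ≠ 1) (hxy : x ≠ y) :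
    (c / (1 - x / y)) ^ 2 * (c / (1 - y)) + (b - c / (1 - x / y)) * (c / (1 - x)) *
        (b - c / (1 - y / x)) =
      (c / (1 - y)) ^ 2 * (c / (1 - x / y)) + (b - c / (1 - y)) * (c / (1 - x)) *
        (b - c / (1 - 1 / y)) := by
  have hyx' : y - x ≠ 0 := sub_ne_zero.mpr hxy.symm
  have hxy' : x - y ≠ 0 := sub_ne_zero.mpr hxy
  have hy1' : y - 1 ≠ 0 := sub_ne_zero.mpr hy1
  have h1y : 1 - y ≠ 0 := sub_ne_zero.mpr hy1.symm
  have h1x : 1 - x ≠ 0 := sub_ne_zero.mpr hx1.symm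
  rw [show 1 - x / y = (y - x) / y by field_simp, show 1 - y / x = (x - y) / x by field_simp,
    show 1 - 1 / y = (y - 1) / y by field_simp]
  field_simp
  ring

/-- For α(x) = c/(1−x) and β(x) = b − c/(1−x), the identity
α(x/y)²α(y) + β(x/y)α(x)β(y/x) = α(y)²α(x/y) + β(y)α(x)β(1/y) holds in F(x,y). -/
theorem second_ybe_identity (F : Type*) [Field F] (b c : F) :
    let x : RatFunc (RatFunc F) := RatFunc.C RatFunc.X
    let y : RatFunc (RatFunc F) := RatFunc.X
    let A : RatFunc (RatFunc F) → RatFunc (RatFunc F) :=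
      fun t => RatFunc.C (RatFunc.C c) / (1 - t)
    let B : RatFunc (RatFunc F) → RatFunc (RatFunc F) :=
      fun t => RatFunc.C (RatFunc.C b) - RatFunc.C (RatFunc.C c) / (1 - t)
    (A (x / y)) ^ 2 * A y + B (x / y) * A x * B (y / x) =
      (A y) ^ 2 * A (x / y) + B y * A x * B (1 / y) := by
  intro x y A B
  have hx : x ≠ 0 := (map_ne_zero C).mpr X_ne_zero
  have hx1 : x ≠ 1 := by
    rw [← map_one C]
    exact C_injective.ne X_ne_one
  exact ybe_identity _ _ x y hx X_ne_zero hx1 X_ne_one (X_ne_C _).symm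
end

section
/- For γ = η, the generating function of the triple composition, ∑_{a,c,h} η(j,k,a)η(i,a,c)η(i+a−c, j+k−a, h) x^c y^h, equals (x^k y^j + x^j y^i + x^i y^k − x^k y^i − x^i y^j − x^j y^k)/((x−1)(y−1)(x/y − 1)); equivalently, multiplying through by (x−1)(y−1)(x−y)/y gives a polynomial identity. -/
/-- η(i,j,k) = 1 if i ≤ k < j, −1 if j ≤ k < i, 0 otherwise (integer indices). -/
def etaZ (i j k : ℤ) : ℤ :=
  if i ≤ k ∧ k < j then 1 else if j ≤ k ∧ k < i then -1 else 0

lemma etaZ_antisymm (p q r : ℤ) : etaZ q p r = - etaZ p q r := by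
  unfold etaZ; split_ifs <;> omega

lemma etaZ_support {p q r : ℤ} (h : etaZ p q r ≠ 0) :
    (p ≤ r ∧ r < q) ∨ (q ≤ r ∧ r < p) := by
  unfold etaZ at h; split_ifs at h with h1 h2
  · exact Or.inl h1
  · exact Or.inr h2
  · exact absurd rfl h

lemma etaZ_eq_ite {p q : ℤ} (hpq : p ≤ q) (r : ℤ) :
    etaZ p q r = if r ∈ Finset.Ico p q then 1 else 0 := by
  unfold etaZ; simp only [Finset.mem_Ico]; split_ifs <;> omega

lemma geo {K : Type*} [Field K] (t : K) (ht : t ≠ 0) (p q : ℤ) (hpq : p ≤ q) :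
    (∑ a ∈ Finset.Ico p q, t ^ a) * (t - 1) = t ^ q - t ^ p := by
  obtain ⟨n, rfl⟩ : ∃ n : ℕ, q = p + n := ⟨(q - p).toNat, by omega⟩
  clear hpq
  induction n with
  | zero => simp
  | succ n ih =>
      have hins : Finset.Ico p (p + (n + 1 : ℕ)) = insert (p + n) (Finset.Ico p (p + n)) := by
        ext r; simp only [Finset.mem_Ico, Finset.mem_insert]; push_cast; omega
      rw [hins, Finset.sum_insert (by simp), add_mul, ih,
        show p + ((n + 1 : ℕ) : ℤ) = (p + n) + 1 by push_cast; ring, zpow_add_one₀ ht]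
      ring

lemma etaSum {K : Type*} [Field K] (N : ℤ) (t : K) (ht : t ≠ 0) {p q : ℤ}
    (hp : 0 ≤ p) (hq : 0 ≤ q) (hpN : p ≤ N + 1) (hqN : q ≤ N + 1) :
    (∑ a ∈ Finset.Icc (0 : ℤ) N, (etaZ p q a : K) * t ^ a) * (t - 1) = t ^ q - t ^ p := by
  have key : ∀ p q : ℤ, 0 ≤ p → q ≤ N + 1 → p ≤ q →
      (∑ a ∈ Finset.Icc (0 : ℤ) N, (etaZ p q a : K) * t ^ a) = ∑ a ∈ Finset.Ico p q, t ^ a := by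
    intro p q hp hqN hpq
    have h1 : ∀ a ∈ Finset.Icc (0 : ℤ) N, (etaZ p q a : K) * t ^ a
        = if a ∈ Finset.Ico p q then t ^ a else 0 := by
      intro a _
      rw [etaZ_eq_ite hpq]
      split_ifs <;> simp
    rw [Finset.sum_congr rfl h1, Finset.sum_ite_mem,
      Finset.inter_eq_right.mpr (fun a ha => by
        simp only [Finset.mem_Ico] at ha; simp only [Finset.mem_Icc]; omega)]
  rcases le_total p q with h | h
  · rw [key p q hp hqN h]; exact geo t ht p q h
  · have h2 : (∑ a ∈ Finset.Icc (0 : ℤ) N, (etaZ p q a : K) * t ^ a)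
        = -∑ a ∈ Finset.Ico q p, t ^ a := by
      rw [← key q p hq hpN h, ← Finset.sum_neg_distrib]
      exact Finset.sum_congr rfl fun a _ => by rw [etaZ_antisymm]; push_cast; ring
    rw [h2, neg_mul, geo t ht q p h]; ring

set_option maxHeartbeats 2000000 in
lemma main_identity {K : Type*} [Field K] (x y : K) (hx : x ≠ 0) (hy : y ≠ 0)
    (hx1 : x ≠ 1) (hy1 : y ≠ 1) (hxy : x ≠ y) (i j k : ℕ) :
    (∑ a ∈ Finset.Icc (0 : ℤ) (i + j + k), ∑ c ∈ Finset.Icc (0 : ℤ) (i + j + k),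
        ∑ h ∈ Finset.Icc (0 : ℤ) (i + j + k),
          ((etaZ j k a * etaZ i a c * etaZ (i + a - c) (j + k - a) h : ℤ) : K) * x ^ c * y ^ h) *
        ((x - 1) * (y - 1) * (x / y - 1)) =
      x ^ (k : ℕ) * y ^ (j : ℕ) + x ^ (j : ℕ) * y ^ (i : ℕ) + x ^ (i : ℕ) * y ^ (k : ℕ)
        - x ^ (k : ℕ) * y ^ (i : ℕ) - x ^ (i : ℕ) * y ^ (j : ℕ) - x ^ (j : ℕ) * y ^ (k : ℕ) := by
  have hq : x / y ≠ 0 := div_ne_zero hx hy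
  have hyi : (y⁻¹ : K) ≠ 0 := inv_ne_zero hy
  have hx1' : x - 1 ≠ 0 := sub_ne_zero.mpr hx1
  have hy1' : y - 1 ≠ 0 := sub_ne_zero.mpr hy1
  have hq1 : x / y - 1 ≠ 0 := sub_ne_zero.mpr fun h => hxy ((div_eq_one_iff_eq hy).mp h)
  have hyi1 : y⁻¹ - 1 ≠ 0 := sub_ne_zero.mpr fun h => hy1 (by rwa [inv_eq_one] at h)
  have hi0 : (0 : ℤ) ≤ (i : ℤ) := Int.natCast_nonneg i
  have hj0 : (0 : ℤ) ≤ (j : ℤ) := Int.natCast_nonneg j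
  have hk0 : (0 : ℤ) ≤ (k : ℤ) := Int.natCast_nonneg k
  calc
    (∑ a ∈ Finset.Icc (0 : ℤ) (i + j + k), ∑ c ∈ Finset.Icc (0 : ℤ) (i + j + k),
        ∑ h ∈ Finset.Icc (0 : ℤ) (i + j + k),
          ((etaZ j k a * etaZ i a c * etaZ (i + a - c) (j + k - a) h : ℤ) : K) * x ^ c * y ^ h) *
        ((x - 1) * (y - 1) * (x / y - 1))
      = (∑ a ∈ Finset.Icc (0 : ℤ) (i + j + k), ∑ c ∈ Finset.Icc (0 : ℤ) (i + j + k),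
          (etaZ j k a : K) * (etaZ i a c : K) * x ^ c
            * (y ^ ((j : ℤ) + k - a) - y ^ ((i : ℤ) + a - c))) * ((x - 1) * (x / y - 1)) := by
        rw [show (x - 1) * (y - 1) * (x / y - 1) = (y - 1) * ((x - 1) * (x / y - 1)) by ring,
          ← mul_assoc]
        congr 1
        rw [Finset.sum_mul]
        refine Finset.sum_congr rfl fun a ha => ?_
        rw [Finset.sum_mul]
        refine Finset.sum_congr rfl fun c hc => ?_
        have expand : (∑ h ∈ Finset.Icc (0 : ℤ) (i + j + k),
              ((etaZ j k a * etaZ i a c * etaZ (i + a - c) (j + k - a) h : ℤ) : K) * x ^ c * y ^ h)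
            = (etaZ j k a : K) * (etaZ i a c : K) * x ^ c
              * ∑ h ∈ Finset.Icc (0 : ℤ) (i + j + k),
                  (etaZ ((i : ℤ) + a - c) ((j : ℤ) + k - a) h : K) * y ^ h := by
          rw [Finset.mul_sum]
          exact Finset.sum_congr rfl fun h _ => by push_cast; ring
        rw [expand]
        by_cases hA : etaZ j k a = 0
        · simp [hA]
        · by_cases hC : etaZ i a c = 0
          · simp [hC]
          · have b1 := etaZ_support hA
            have b2 := etaZ_support hC
            have e := etaSum ((i : ℤ) + j + k) y hy (p := (i : ℤ) + a - c) (q := (j : ℤ) + k - a)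
              (by omega) (by omega) (by omega) (by omega)
            linear_combination ((etaZ j k a : K) * (etaZ i a c : K) * x ^ c) * e
    _ = ∑ a ∈ Finset.Icc (0 : ℤ) (i + j + k),
          (etaZ j k a : K) *
            (y ^ ((j : ℤ) + k - a) * ((x ^ a - x ^ (i : ℤ)) * (x / y - 1))
              - y ^ ((i : ℤ) + a) * (((x / y) ^ a - (x / y) ^ (i : ℤ)) * (x - 1))) := by
        rw [Finset.sum_mul]
        refine Finset.sum_congr rfl fun a ha => ?_
        have pointwise : ∀ c ∈ Finset.Icc (0 : ℤ) (i + j + k),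
            (etaZ j k a : K) * (etaZ i a c : K) * x ^ c
              * (y ^ ((j : ℤ) + k - a) - y ^ ((i : ℤ) + a - c))
            = (etaZ j k a : K) * y ^ ((j : ℤ) + k - a) * ((etaZ i a c : K) * x ^ c)
              - (etaZ j k a : K) * y ^ ((i : ℤ) + a) * ((etaZ i a c : K) * (x / y) ^ c) := by
          intro c _
          have e1 : y ^ ((i : ℤ) + a - c) = y ^ ((i : ℤ) + a) * (y ^ c)⁻¹ := by
            rw [show (i : ℤ) + a - c = ((i : ℤ) + a) + (-c) by ring, zpow_add₀ hy, zpow_neg]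
          have e2 : (x / y) ^ c = x ^ c * (y ^ c)⁻¹ := by rw [div_zpow, div_eq_mul_inv]
          rw [e1, e2]; ring
        rw [Finset.sum_congr rfl pointwise, Finset.sum_sub_distrib,
          ← Finset.mul_sum, ← Finset.mul_sum]
        by_cases hA : etaZ j k a = 0
        · simp [hA]
        · have b1 := etaZ_support hA
          have eU := etaSum ((i : ℤ) + j + k) x hx (p := (i : ℤ)) (q := a)
            (by omega) (by omega) (by omega) (by omega)
          have eV := etaSum ((i : ℤ) + j + k) (x / y) hq (p := (i : ℤ)) (q := a)
            (by omega) (by omega) (by omega) (by omega)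
          linear_combination ((etaZ j k a : K) * y ^ ((j : ℤ) + k - a) * (x / y - 1)) * eU
            - ((etaZ j k a : K) * y ^ ((i : ℤ) + a) * (x - 1)) * eV
    _ = ∑ a ∈ Finset.Icc (0 : ℤ) (i + j + k),
          ((y ^ ((j : ℤ) + (k : ℤ)) * (x / y - 1)) * ((etaZ j k a : K) * (x / y) ^ a)
            - (x ^ ((i : ℤ)) * y ^ ((j : ℤ) + (k : ℤ)) * (x / y - 1)) * ((etaZ j k a : K) * (y⁻¹) ^ a)
            - (y ^ ((i : ℤ)) * (x - 1)) * ((etaZ j k a : K) * x ^ a)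
            + (x ^ ((i : ℤ)) * (x - 1)) * ((etaZ j k a : K) * y ^ a)) := by
        refine Finset.sum_congr rfl fun a ha => ?_
        have e1 : y ^ ((j : ℤ) + k - a) = y ^ ((j : ℤ) + k) * (y ^ a)⁻¹ := by
          rw [show (j : ℤ) + k - a = ((j : ℤ) + k) + (-a) by ring, zpow_add₀ hy, zpow_neg]
        have e2 : y ^ ((i : ℤ) + a) = y ^ (i : ℤ) * y ^ a := zpow_add₀ hy _ _
        have e3 : (x / y) ^ a = x ^ a * (y ^ a)⁻¹ := by rw [div_zpow, div_eq_mul_inv]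
        have e4 : (x / y) ^ (i : ℤ) = x ^ (i : ℤ) * (y ^ (i : ℤ))⁻¹ := by
          rw [div_zpow, div_eq_mul_inv]
        have e5 : (y⁻¹) ^ a = (y ^ a)⁻¹ := inv_zpow y a
        have hya : y ^ a ≠ 0 := zpow_ne_zero _ hy
        have hyi' : y ^ (i : ℤ) ≠ 0 := zpow_ne_zero _ hy
        rw [e1, e2, e3, e4, e5]
        field_simp
        ring
    _ = (y ^ ((j : ℤ) + (k : ℤ)) * (x / y - 1))
          * (∑ a ∈ Finset.Icc (0 : ℤ) (i + j + k), (etaZ j k a : K) * (x / y) ^ a)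
        - (x ^ ((i : ℤ)) * y ^ ((j : ℤ) + (k : ℤ)) * (x / y - 1))
          * (∑ a ∈ Finset.Icc (0 : ℤ) (i + j + k), (etaZ j k a : K) * (y⁻¹) ^ a)
        - (y ^ ((i : ℤ)) * (x - 1))
          * (∑ a ∈ Finset.Icc (0 : ℤ) (i + j + k), (etaZ j k a : K) * x ^ a)
        + (x ^ ((i : ℤ)) * (x - 1))
          * (∑ a ∈ Finset.Icc (0 : ℤ) (i + j + k), (etaZ j k a : K) * y ^ a) := by
        simp only [Finset.sum_add_distrib, Finset.sum_sub_distrib, ← Finset.mul_sum]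
    _ = x ^ (k : ℕ) * y ^ (j : ℕ) + x ^ (j : ℕ) * y ^ (i : ℕ) + x ^ (i : ℕ) * y ^ (k : ℕ)
        - x ^ (k : ℕ) * y ^ (i : ℕ) - x ^ (i : ℕ) * y ^ (j : ℕ) - x ^ (j : ℕ) * y ^ (k : ℕ) := by
        have E1 := etaSum ((i : ℤ) + j + k) (x / y) hq (p := (j : ℤ)) (q := (k : ℤ))
          (by omega) (by omega) (by omega) (by omega)
        have E2 := etaSum ((i : ℤ) + j + k) (y⁻¹) hyi (p := (j : ℤ)) (q := (k : ℤ))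
          (by omega) (by omega) (by omega) (by omega)
        have E3 := etaSum ((i : ℤ) + j + k) x hx (p := (j : ℤ)) (q := (k : ℤ))
          (by omega) (by omega) (by omega) (by omega)
        have E4 := etaSum ((i : ℤ) + j + k) y hy (p := (j : ℤ)) (q := (k : ℤ))
          (by omega) (by omega) (by omega) (by omega)
        simp only [zpow_natCast] at E1 E2 E3 E4 ⊢
        have cjk : y ^ ((j : ℤ) + (k : ℤ)) = y ^ (j : ℕ) * y ^ (k : ℕ) := by
          rw [zpow_add₀ hy, zpow_natCast, zpow_natCast]
        rw [cjk]
        have h1y : (1 : K) - y ≠ 0 := fun h => hy1 (sub_eq_zero.mp h).symm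
        have e1a : (x / y) ^ (k : ℕ) * y ^ (k : ℕ) = x ^ (k : ℕ) := by
          rw [div_pow, div_mul_cancel₀ _ (pow_ne_zero _ hy)]
        have e1b : (x / y) ^ (j : ℕ) * y ^ (j : ℕ) = x ^ (j : ℕ) := by
          rw [div_pow, div_mul_cancel₀ _ (pow_ne_zero _ hy)]
        have e2a : (y⁻¹) ^ (k : ℕ) * y ^ (k : ℕ) = 1 := by
          rw [inv_pow, inv_mul_cancel₀ (pow_ne_zero _ hy)]
        have e2b : (y⁻¹) ^ (j : ℕ) * y ^ (j : ℕ) = 1 := by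
          rw [inv_pow, inv_mul_cancel₀ (pow_ne_zero _ hy)]
        have q1 : (x / y - 1) * y = x - y := by field_simp
        have q2 : (y⁻¹ - 1) * y = 1 - y := by field_simp
        set S1 : K := ∑ a ∈ Finset.Icc (0 : ℤ) (i + j + k), (etaZ j k a : K) * (x / y) ^ a
          with hS1
        set S2 : K := ∑ a ∈ Finset.Icc (0 : ℤ) (i + j + k), (etaZ j k a : K) * (y⁻¹) ^ a
          with hS2
        set S3 : K := ∑ a ∈ Finset.Icc (0 : ℤ) (i + j + k), (etaZ j k a : K) * x ^ a
          with hS3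
        set S4 : K := ∑ a ∈ Finset.Icc (0 : ℤ) (i + j + k), (etaZ j k a : K) * y ^ a
          with hS4
        have E1'' : S1 * ((x - y) * (y ^ (j : ℕ) * y ^ (k : ℕ)))
            = x ^ (k : ℕ) * y ^ (j : ℕ) * y - x ^ (j : ℕ) * y ^ (k : ℕ) * y := by
          linear_combination (y ^ (j : ℕ) * y ^ (k : ℕ) * y) * E1
            + (y ^ (j : ℕ) * y) * e1a - (y ^ (k : ℕ) * y) * e1b
            - (S1 * y ^ (j : ℕ) * y ^ (k : ℕ)) * q1
        have E2'' : S2 * (((1 : K) - y) * (y ^ (j : ℕ) * y ^ (k : ℕ)))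
            = y ^ (j : ℕ) * y - y ^ (k : ℕ) * y := by
          linear_combination (y ^ (j : ℕ) * y ^ (k : ℕ) * y) * E2
            + (y ^ (j : ℕ) * y) * e2a - (y ^ (k : ℕ) * y) * e2b
            - (S2 * y ^ (j : ℕ) * y ^ (k : ℕ)) * q2
        apply mul_right_cancel₀ (b := y * (1 - y)) (mul_ne_zero hy h1y)
        linear_combination ((1 : K) - y) * E1'' - (x ^ (i : ℕ) * (x - y)) * E2''
          - (y ^ (i : ℕ) * y * (1 - y)) * E3 - (x ^ (i : ℕ) * (x - 1) * y) * E4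
          + (((1 : K) - y) * y ^ (j : ℕ) * y ^ (k : ℕ) * (S1 - x ^ (i : ℕ) * S2)) * q1

/-- For γ = η, the generating function of the triple composition,
∑_{a,c,h} η(j,k,a)η(i,a,c)η(i+a−c,j+k−a,h) x^c y^h, equals
(x^k y^j + x^j y^i + x^i y^k − x^k y^i − x^i y^j − x^j y^k)/((x−1)(y−1)(x/y−1)). -/
theorem triple_eta_generating_function (F : Type*) [Field F] (i j k : ℕ) :
    let x : RatFunc (RatFunc F) := RatFunc.C RatFunc.X
    let y : RatFunc (RatFunc F) := RatFunc.X
    (∑ a ∈ Finset.Icc (0 : ℤ) (i + j + k), ∑ c ∈ Finset.Icc (0 : ℤ) (i + j + k),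
        ∑ h ∈ Finset.Icc (0 : ℤ) (i + j + k),
          ((etaZ j k a * etaZ i a c * etaZ (i + a - c) (j + k - a) h : ℤ) :
              RatFunc (RatFunc F)) * x ^ c * y ^ h) *
        ((x - 1) * (y - 1) * (x / y - 1)) =
      x ^ (k : ℕ) * y ^ (j : ℕ) + x ^ (j : ℕ) * y ^ (i : ℕ) + x ^ (i : ℕ) * y ^ (k : ℕ)
        - x ^ (k : ℕ) * y ^ (i : ℕ) - x ^ (i : ℕ) * y ^ (j : ℕ) - x ^ (j : ℕ) * y ^ (k : ℕ) := by
  intro x y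
  have hX1 : (RatFunc.X : RatFunc F) ≠ 1 := by
    intro h
    have hinj := IsFractionRing.injective (Polynomial F) (RatFunc F)
    have h2 : (Polynomial.X : Polynomial F) = 1 := by
      apply hinj; simpa [RatFunc.algebraMap_X] using h
    simpa [Polynomial.coeff_one] using congrArg (fun p => Polynomial.coeff p 1) h2
  have hy : y ≠ 0 := RatFunc.X_ne_zero
  have hx : x ≠ 0 := by
    intro h
    exact RatFunc.X_ne_zero ((RatFunc.C (K := RatFunc F)).injective (by rw [map_zero, ← h]))
  have hy1 : y ≠ 1 := by
    intro h
    have hinj := IsFractionRing.injective (Polynomial (RatFunc F)) (RatFunc (RatFunc F))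
    have h2 : (Polynomial.X : Polynomial (RatFunc F)) = 1 := by
      apply hinj; simpa [RatFunc.algebraMap_X] using h
    simpa [Polynomial.coeff_one] using congrArg (fun p => Polynomial.coeff p 1) h2
  have hx1 : x ≠ 1 := by
    intro h
    exact hX1 ((RatFunc.C (K := RatFunc F)).injective (by rw [map_one, ← h]))
  have hxy : x ≠ y := by
    intro h
    have := congrArg RatFunc.intDegree h
    simp only [x, y, RatFunc.intDegree_C, RatFunc.intDegree_X] at this
    exact zero_ne_one this
  exact main_identity x y hx hy hx1 hy1 hxy i j k
end

section
/- Twisting invariance: if the Cremmer–Gervais operator ρ₁ = qP + q̂η satisfies the braid Yang–Baxter equation, then so does the two-parameter operator ρ_p defined by ρ_p(e_i⊗e_j) = q p^{i−j} e_j⊗e_i + ∑_k q̂ p^{i−k} η(i,j,k) e_k⊗e_{i+j−k}, for any nonzero p ∈ F. Concretely, ρ_p = D₁ ρ₁ D₁^{-1} where D is a suitable diagonal twist; in particular ρ_p satisfies the braid YBE. -/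
noncomputable section

/-- η(i,j,k) = 1 if i ≤ k < j, −1 if j ≤ k < i, 0 otherwise. -/
def etaN (i j k : ℕ) : ℤ :=
  if i ≤ k ∧ k < j then 1 else if j ≤ k ∧ k < i then -1 else 0

/-- Matrix of the homogeneous operator with coefficients c (1-based indices). -/
def homMat (F : Type*) [Field F] (n : ℕ) (c : ℕ → ℕ → ℕ → F) :
    Matrix (Fin n × Fin n) (Fin n × Fin n) F :=
  fun kl ij =>
    if (kl.1 : ℕ) + (kl.2 : ℕ) = (ij.1 : ℕ) + (ij.2 : ℕ) then
      c ((ij.1 : ℕ) + 1) ((ij.2 : ℕ) + 1) ((kl.1 : ℕ) + 1)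
    else 0

/-- Matrix of the flip operator P(e_i ⊗ e_j) = e_j ⊗ e_i. -/
def Pmat (F : Type*) [Field F] (n : ℕ) : Matrix (Fin n × Fin n) (Fin n × Fin n) F :=
  fun kl ij => if kl.1 = ij.2 ∧ kl.2 = ij.1 then 1 else 0

/-- Matrix of the operator η(e_i ⊗ e_j) = ∑_k η(i,j,k) e_k ⊗ e_{i+j−k}. -/
def etaMat (F : Type*) [Field F] (n : ℕ) : Matrix (Fin n × Fin n) (Fin n × Fin n) F :=
  homMat F n (fun i j k => ((etaN i j k : ℤ) : F))

/-- The braid Yang–Baxter equation γ₁₂γ₂₃γ₁₂ = γ₂₃γ₁₂γ₂₃ in matrix form. -/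
def ybe {F : Type*} [Field F] {n : ℕ} (M : Matrix (Fin n × Fin n) (Fin n × Fin n) F) : Prop :=
  let M12 : Matrix (Fin n × Fin n × Fin n) (Fin n × Fin n × Fin n) F :=
    (Matrix.reindex (Equiv.prodAssoc (Fin n) (Fin n) (Fin n))
        (Equiv.prodAssoc (Fin n) (Fin n) (Fin n)))
      (Matrix.kroneckerMap (· * ·) M (1 : Matrix (Fin n) (Fin n) F))
  let M23 : Matrix (Fin n × Fin n × Fin n) (Fin n × Fin n × Fin n) F :=
    Matrix.kroneckerMap (· * ·) (1 : Matrix (Fin n) (Fin n) F) M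
  M12 * M23 * M12 = M23 * M12 * M23


/-- Coefficients of the two-parameter Cremmer–Gervais operator:
ρ_p(i,j,k) = q p^{i−j}[k=j] + (q−q⁻¹) p^{i−k} η(i,j,k). -/
def rhoCoeff (F : Type*) [Field F] (q p : F) (i j k : ℕ) : F :=
  q * p ^ ((i : ℤ) - (j : ℤ)) * (if k = j then 1 else 0)
    + (q - q⁻¹) * p ^ ((i : ℤ) - (k : ℤ)) * ((etaN i j k : ℤ) : F)

lemma rhoCoeff_scale {F : Type*} [Field F] (q p : F) (i j k : ℕ) :
    rhoCoeff F q p i j k = p ^ ((i : ℤ) - (k : ℤ)) * rhoCoeff F q 1 i j k := by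
  unfold rhoCoeff
  rcases eq_or_ne k j with h | h
  · subst h
    simp only [if_pos rfl, one_zpow]
    ring
  · simp only [if_neg h, one_zpow]
    ring

lemma homMat_scale {F : Type*} [Field F] (n : ℕ) (q p : F) (kl ij : Fin n × Fin n) :
    homMat F n (rhoCoeff F q p) kl ij
      = p ^ ((ij.1 : ℤ) - (kl.1 : ℤ)) * homMat F n (rhoCoeff F q 1) kl ij := by
  unfold homMat
  split_ifs with h
  · rw [rhoCoeff_scale]
    congr 2
    push_cast
    ring
  · rw [mul_zero]

/-- Twisting invariance: if ρ₁ = qP + (q−q⁻¹)η satisfies the braid Yang–Baxter equation,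
then so does the two-parameter operator ρ_p for any nonzero p. -/
theorem rho_p_ybe (F : Type*) [Field F] (n : ℕ) (q p : F) (hq : q ≠ 0) (hp : p ≠ 0)
    (h1 : ybe (homMat F n (rhoCoeff F q 1))) :
    ybe (homMat F n (rhoCoeff F q p)) := by
  classical
  simp only [ybe] at h1 ⊢
  set A := homMat F n (rhoCoeff F q 1) with hA
  set Ap := homMat F n (rhoCoeff F q p) with hAp
  set g : Fin n × Fin n × Fin n → F :=
    fun x => p ^ (-(2 * ((x.1 : ℕ) : ℤ) + ((x.2.1 : ℕ) : ℤ))) with hg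
  set D : Matrix (Fin n × Fin n × Fin n) (Fin n × Fin n × Fin n) F :=
    Matrix.diagonal g with hD
  set D' : Matrix (Fin n × Fin n × Fin n) (Fin n × Fin n × Fin n) F :=
    Matrix.diagonal (fun x => (g x)⁻¹) with hD'
  have hD'D : D' * D = 1 := by
    rw [hD, hD', Matrix.diagonal_mul_diagonal]
    have : (fun x => (g x)⁻¹ * g x) = fun _ => (1 : F) := by
      funext x
      exact inv_mul_cancel₀ (zpow_ne_zero _ hp)
    rw [this, Matrix.diagonal_one]
  have h12 :
      (Matrix.reindex (Equiv.prodAssoc (Fin n) (Fin n) (Fin n))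
          (Equiv.prodAssoc (Fin n) (Fin n) (Fin n)))
        (Matrix.kroneckerMap (· * ·) Ap (1 : Matrix (Fin n) (Fin n) F))
      = D * (Matrix.reindex (Equiv.prodAssoc (Fin n) (Fin n) (Fin n))
          (Equiv.prodAssoc (Fin n) (Fin n) (Fin n)))
        (Matrix.kroneckerMap (· * ·) A (1 : Matrix (Fin n) (Fin n) F)) * D' := by
    ext x y
    simp only [hD, hD', Matrix.mul_diagonal, Matrix.diagonal_mul,
      Matrix.reindex_apply, Matrix.submatrix_apply, Equiv.prodAssoc_symm_apply,
      Matrix.kroneckerMap_apply, Matrix.one_apply]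
    rw [hAp, homMat_scale, hA]
    unfold homMat
    dsimp only
    split_ifs with hs he
    · have key : g x * (g y)⁻¹ = p ^ (((y.1 : ℕ) : ℤ) - ((x.1 : ℕ) : ℤ)) := by
        rw [hg, ← zpow_neg, ← zpow_add₀ hp]
        congr 1
        omega
      rw [mul_one, mul_one, mul_comm (g x) _, mul_assoc, key]
      ring
    all_goals ring
  have h23 :
      Matrix.kroneckerMap (· * ·) (1 : Matrix (Fin n) (Fin n) F) Ap
      = D * Matrix.kroneckerMap (· * ·) (1 : Matrix (Fin n) (Fin n) F) A * D' := by
    ext x y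
    simp only [hD, hD', Matrix.mul_diagonal, Matrix.diagonal_mul,
      Matrix.kroneckerMap_apply, Matrix.one_apply]
    rw [hAp, homMat_scale, hA]
    unfold homMat
    split_ifs with he hs
    · have he' : ((x.1 : ℕ) : ℤ) = ((y.1 : ℕ) : ℤ) := by rw [he]
      have key : g x * (g y)⁻¹ = p ^ (((y.2.1 : ℕ) : ℤ) - ((x.2.1 : ℕ) : ℤ)) := by
        rw [hg, ← zpow_neg, ← zpow_add₀ hp]
        congr 1
        omega
      rw [mul_comm (g x) _, mul_assoc, key]
      ring
    all_goals ring
  rw [h12, h23]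
  have cancel : ∀ X Y : Matrix (Fin n × Fin n × Fin n) (Fin n × Fin n × Fin n) F,
      (D * X * D') * (D * Y * D') = D * (X * Y) * D' := by
    intro X Y
    simp only [Matrix.mul_assoc]
    rw [← Matrix.mul_assoc D' D, hD'D, Matrix.one_mul]
  rw [cancel, cancel, cancel, cancel, h1]
end
end

section
/- The Cremmer–Gervais intertwining identity: with A(e_i) = ∑_a e_a ⊗ K_{ν_a}^{−2i} and R(e_i⊗e_j) = e_i⊗e_j⊗α((K_{α_{ji}}q^{−δ_{ij}})²) + e_j⊗e_i⊗β((K_{α_{ji}}q^{−δ_{ij}})²), where α(x) = (q−q^{-1})/(1−x) and β(x) = (q^{-1}−qx)/(1−x), one has R A₁ A₂ = A₁ A₂ ρ, where ρ is the Cremmer–Gervais operator ρ(e_i⊗e_j) = q·q^{2(i−j)/n} e_j⊗e_i + ∑_k q̂ q^{2(i−k)/n} η(i,j,k) e_k⊗e_{i+j−k}. In matrix form: ∑_{c,d} R^{ms}_{cd} (A^c_i)^{ν_d} A^d_j = ∑_{k} ρ(i,j,k) (A^m_k)^{ν_s} A^s_{i+j−k} for all i,j,m,s. -/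
noncomputable section

/-- A^m_a = K_m^{−2a}. -/
def Amap {B : Type*} [Field B] {n : ℕ} (K : Fin n → B) (m : Fin n) (a : ℕ) : B :=
  (K m) ^ (-(2 * (a : ℤ)))

/-- (A^m_a)^{ν_s} = q^{−2aδ_{ms} + 2a/n} K_m^{−2a}, where q^{1/n} = t. -/
def AmapTw {B : Type*} [Field B] {n : ℕ} (K : Fin n → B) (q t : B) (m : Fin n) (a : ℕ)
    (s : Fin n) : B :=
  q ^ (-(2 * (a : ℤ)) * (if m = s then 1 else 0)) * t ^ (2 * (a : ℤ)) *
    (K m) ^ (-(2 * (a : ℤ)))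

/-- The argument (K_d K_c⁻¹ q^{−δ_{cd}})² appearing in the standard dynamical R-matrix. -/
def arg {B : Type*} [Field B] {n : ℕ} (K : Fin n → B) (q : B) (c d : Fin n) : B :=
  (K d * (K c)⁻¹ * q ^ (-(if c = d then (1 : ℤ) else 0))) ^ 2

/-!
Both sides collapse to the single index pair `(m, s)`. Put `x = arg K q m s`, `v = K_s⁻²` and
`u = x v`; then `(A^m_k)^{ν_s} = t^{2k} u^k` and `A^s_k = v^k`, so the left side is
`t^{2i} (α(x) u^i v^j + β(x) v^i u^j)` (for `m = s` the `β`-term vanishes since `q x = q⁻¹`),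
and the right side is `t^{2i} (q u^j v^i + (q - q⁻¹) S)` with `S = ∑ₖ η(i,j,k) u^k v^{i+j-k}`.
The `η`-weighted sum telescopes, `S (v - u) = u^i v^{j+1} - u^j v^{i+1}`, and after multiplying
by `(1 - x) v` the claim becomes a polynomial identity.
-/

open Finset

lemma etaN_eq_ite_sub_ite (i j k : ℕ) :
    etaN i j k = (if k ∈ Ico i j then 1 else 0) - (if k ∈ Ico j i then 1 else 0) := by
  unfold etaN
  simp only [mem_Ico]
  split_ifs <;> omega

lemma sum_Icc_etaN_mul {R : Type*} [Ring R] (i j : ℕ) (g : ℕ → R) :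
    ∑ k ∈ Icc (min i j) (max i j), (etaN i j k : R) * g k =
      ∑ k ∈ Ico i j, g k - ∑ k ∈ Ico j i, g k := by
  have h₁ : Ico i j ⊆ Icc (min i j) (max i j) := fun k hk => by
    simp only [mem_Ico, mem_Icc] at hk ⊢; omega
  have h₂ : Ico j i ⊆ Icc (min i j) (max i j) := fun k hk => by
    simp only [mem_Ico, mem_Icc] at hk ⊢; omega
  simp only [etaN_eq_ite_sub_ite, Int.cast_sub, Int.cast_ite, Int.cast_one, Int.cast_zero, sub_mul,
    ite_mul, one_mul, zero_mul, sum_sub_distrib, sum_ite_mem, inter_eq_right.2 h₁,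
    inter_eq_right.2 h₂]

lemma sum_Ico_pow_mul_pow_mul_sub {R : Type*} [CommRing R] (u v : R) {i j : ℕ} (h : i ≤ j) :
    (∑ k ∈ Ico i j, u ^ k * v ^ (i + j - k)) * (v - u) =
      u ^ i * v ^ (j + 1) - u ^ j * v ^ (i + 1) := by
  set f : ℕ → R := fun k => u ^ k * v ^ (i + j + 1 - k)
  have hf : ∀ k ∈ Ico i j, u ^ k * v ^ (i + j - k) * (v - u) = -(f (k + 1) - f k) := by
    intro k hk
    have hk := (mem_Ico.1 hk).2
    simp only [f, show i + j + 1 - k = i + j - k + 1 by omega,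
      show i + j + 1 - (k + 1) = i + j - k by omega]
    ring
  rw [sum_mul, sum_congr rfl hf, sum_neg_distrib, Finset.sum_Ico_sub f h]
  simp only [f, show i + j + 1 - i = j + 1 by omega, show i + j + 1 - j = i + 1 by omega]
  ring

lemma sum_Icc_etaN_mul_sub {R : Type*} [CommRing R] (u v : R) (i j : ℕ) :
    (∑ k ∈ Icc (min i j) (max i j), (etaN i j k : R) * (u ^ k * v ^ (i + j - k))) * (v - u) =
      u ^ i * v ^ (j + 1) - u ^ j * v ^ (i + 1) := by
  rw [sum_Icc_etaN_mul, sub_mul]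
  rcases le_total i j with h | h
  · rw [Ico_eq_empty_of_le h, sum_empty, zero_mul, sub_zero, sum_Ico_pow_mul_pow_mul_sub u v h]
  · rw [Ico_eq_empty_of_le h, sum_empty, zero_mul, zero_sub, add_comm i j,
      sum_Ico_pow_mul_pow_mul_sub u v h, neg_sub]

lemma alpha_beta_identity {B : Type*} [Field B] {q x v S : B} (i j : ℕ) (hx : x ≠ 1) (hv : v ≠ 0)
    (hS : S * (v - x * v) = (x * v) ^ i * v ^ (j + 1) - (x * v) ^ j * v ^ (i + 1)) :
    (q - q⁻¹) / (1 - x) * ((x * v) ^ i * v ^ j) + (q⁻¹ - q * x) / (1 - x) * (v ^ i * (x * v) ^ j) =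
      q * ((x * v) ^ j * v ^ i) + (q - q⁻¹) * S := by
  have hx' : 1 - x ≠ 0 := sub_ne_zero.2 hx.symm
  refine mul_right_cancel₀ (mul_ne_zero hx' hv) ?_
  have hα : (q - q⁻¹) / (1 - x) * (1 - x) = q - q⁻¹ := div_mul_cancel₀ _ hx'
  have hβ : (q⁻¹ - q * x) / (1 - x) * (1 - x) = q⁻¹ - q * x := div_mul_cancel₀ _ hx'
  linear_combination
    ((x * v) ^ i * v ^ j * v) * hα + (v ^ i * (x * v) ^ j * v) * hβ + (q⁻¹ - q) * hS

lemma zpow_neg_two_mul_natCast {B : Type*} [DivisionRing B] (x : B) (a : ℕ) :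
    x ^ (-(2 * (a : ℤ))) = ((x ^ 2)⁻¹) ^ a := by
  rw [zpow_neg, ← Nat.cast_ofNat, ← Nat.cast_mul, zpow_natCast, pow_mul, inv_pow]

section

variable {B : Type*} [Field B] {n : ℕ} (K : Fin n → B) (q t : B)

lemma Amap_eq_pow (m : Fin n) (a : ℕ) : Amap K m a = ((K m ^ 2)⁻¹) ^ a :=
  zpow_neg_two_mul_natCast _ _

lemma arg_mul_inv_sq_of_ne {m s : Fin n} (h : m ≠ s) (hs : K s ≠ 0) :
    arg K q m s * (K s ^ 2)⁻¹ = (K m ^ 2)⁻¹ := by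
  unfold arg
  rw [if_neg h, neg_zero, zpow_zero, mul_one]
  field_simp

lemma AmapTw_eq_pow {s : Fin n} (hs : K s ≠ 0) (m : Fin n) (a : ℕ) :
    AmapTw K q t m a s = t ^ (2 * (a : ℤ)) * (arg K q m s * (K s ^ 2)⁻¹) ^ a := by
  unfold AmapTw
  rw [zpow_neg_two_mul_natCast (K m)]
  by_cases h : m = s
  · subst h
    rw [if_pos rfl, mul_one, zpow_neg_two_mul_natCast, arg, if_pos rfl, mul_inv_cancel₀ hs, one_mul,
      zpow_neg_one, mul_pow]
    ring
  · rw [if_neg h, mul_zero, zpow_zero, one_mul, arg_mul_inv_sq_of_ne K q h hs]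

lemma mul_arg_self {m : Fin n} (hm : K m ≠ 0) : q * arg K q m m = q⁻¹ := by
  unfold arg
  rw [if_pos rfl, mul_inv_cancel₀ hm, one_mul, zpow_neg_one, inv_pow, ← div_eq_mul_inv, sq,
    div_self_mul_self']

lemma intertwiner_lhs_eq {m s : Fin n} (hm : K m ≠ 0) (hs : K s ≠ 0) (i j : ℕ) :
    (∑ c : Fin n, ∑ d : Fin n,
        ((if m = c ∧ s = d then 1 else 0) * ((q - q⁻¹) / (1 - arg K q c d))
            + (if m = d ∧ s = c then 1 else 0) *
                ((q⁻¹ - q * arg K q d c) / (1 - arg K q d c)))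
          * AmapTw K q t c i d * Amap K d j) =
      t ^ (2 * (i : ℤ)) *
        ((q - q⁻¹) / (1 - arg K q m s) * ((arg K q m s * (K s ^ 2)⁻¹) ^ i * ((K s ^ 2)⁻¹) ^ j)
          + (q⁻¹ - q * arg K q m s) / (1 - arg K q m s) *
              (((K s ^ 2)⁻¹) ^ i * (arg K q m s * (K s ^ 2)⁻¹) ^ j)) := by
  simp only [add_mul, sum_add_distrib, ite_and, ite_mul, one_mul, zero_mul, sum_ite_eq,
    mem_univ, if_true, sum_ite_irrel, sum_const_zero]
  have hswap : (q⁻¹ - q * arg K q m s) / (1 - arg K q m s) * (AmapTw K q t s i m * Amap K m j) =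
      (q⁻¹ - q * arg K q m s) / (1 - arg K q m s) *
        (t ^ (2 * (i : ℤ)) * (((K s ^ 2)⁻¹) ^ i * (arg K q m s * (K s ^ 2)⁻¹) ^ j)) := by
    obtain rfl | h := eq_or_ne m s
    · rw [mul_arg_self K q hs, sub_self, zero_div, zero_mul, zero_mul]
    · rw [AmapTw_eq_pow K q t hm, Amap_eq_pow, arg_mul_inv_sq_of_ne K q h.symm hm,
        ← arg_mul_inv_sq_of_ne K q h hs]
      ring
  rw [AmapTw_eq_pow K q t hs, Amap_eq_pow K s, mul_assoc _ (AmapTw K q t s i m), hswap]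
  ring

lemma intertwiner_rhs_eq {m s : Fin n} (hs : K s ≠ 0) {i : ℕ} (hi : i ≠ 0) (j : ℕ) :
    ∑ k ∈ Icc (min i j) (max i j),
        (q * t ^ (2 * ((i : ℤ) - (j : ℤ))) * (if k = j then 1 else 0)
            + (q - q⁻¹) * t ^ (2 * ((i : ℤ) - (k : ℤ))) * ((etaN i j k : ℤ) : B))
          * AmapTw K q t m k s * Amap K s (i + j - k) =
      t ^ (2 * (i : ℤ)) *
        (q * ((arg K q m s * (K s ^ 2)⁻¹) ^ j * ((K s ^ 2)⁻¹) ^ i)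
          + (q - q⁻¹) * ∑ k ∈ Icc (min i j) (max i j),
              (etaN i j k : B) * ((arg K q m s * (K s ^ 2)⁻¹) ^ k * ((K s ^ 2)⁻¹) ^ (i + j - k))) := by
  have ht (k : ℕ) : t ^ (2 * ((i : ℤ) - k)) * t ^ (2 * (k : ℤ)) = t ^ (2 * (i : ℤ)) := by
    -- `t` may be `0`: `zpow_add'` only needs the total exponent `2 * i` to be nonzero
    rw [← zpow_add' (Or.inr (Or.inl (by omega)))]
    ring_nf
  set u := arg K q m s * (K s ^ 2)⁻¹
  set v := (K s ^ 2)⁻¹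
  have hterm : ∀ k ∈ Icc (min i j) (max i j),
      (q * t ^ (2 * ((i : ℤ) - (j : ℤ))) * (if k = j then 1 else 0)
          + (q - q⁻¹) * t ^ (2 * ((i : ℤ) - (k : ℤ))) * ((etaN i j k : ℤ) : B))
        * AmapTw K q t m k s * Amap K s (i + j - k) =
      t ^ (2 * (i : ℤ)) * ((if k = j then q * (u ^ k * v ^ (i + j - k)) else 0)
        + (q - q⁻¹) * ((etaN i j k : B) * (u ^ k * v ^ (i + j - k)))) := by
    intro k _
    rw [AmapTw_eq_pow K q t hs, Amap_eq_pow, ← ht k]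
    split_ifs with hkj
    · subst hkj
      ring
    · ring
  have hj : j ∈ Icc (min i j) (max i j) := mem_Icc.2 ⟨min_le_right i j, le_max_right i j⟩
  rw [sum_congr rfl hterm, ← mul_sum, sum_add_distrib, sum_ite_eq', if_pos hj, ← mul_sum,
    Nat.add_sub_cancel]

end

theorem cremmer_gervais_intertwining_general (B : Type*) [Field B] (n : ℕ)
    (q t : B)
    (K : Fin n → B) (hK : ∀ m, K m ≠ 0)
    (hgeneric : ∀ c d : Fin n, arg K q c d ≠ 1) :
    ∀ i j : ℕ, 1 ≤ i → i ≤ n → 1 ≤ j → j ≤ n → ∀ m s : Fin n,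
      (∑ c : Fin n, ∑ d : Fin n,
          ((if m = c ∧ s = d then 1 else 0) * ((q - q⁻¹) / (1 - arg K q c d))
              + (if m = d ∧ s = c then 1 else 0) *
                  ((q⁻¹ - q * arg K q d c) / (1 - arg K q d c)))
            * AmapTw K q t c i d * Amap K d j) =
        ∑ k ∈ Finset.Icc (min i j) (max i j),
          (q * t ^ (2 * ((i : ℤ) - (j : ℤ))) * (if k = j then 1 else 0)
              + (q - q⁻¹) * t ^ (2 * ((i : ℤ) - (k : ℤ))) * ((etaN i j k : ℤ) : B))
            * AmapTw K q t m k s * Amap K s (i + j - k) := by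
  intro i j hi _ _ _ m s
  rw [intertwiner_lhs_eq K q t (hK m) (hK s),
    intertwiner_rhs_eq K q t (hK s) (Nat.one_le_iff_ne_zero.mp hi)]
  congr 1
  exact alpha_beta_identity i j (hgeneric m s) (inv_ne_zero (pow_ne_zero 2 (hK s)))
    (sum_Icc_etaN_mul_sub _ _ i j)

/-- The Cremmer–Gervais intertwining identity R A₁ A₂ = A₁ A₂ ρ in matrix form:
∑_{c,d} R^{ms}_{cd} (A^c_i)^{ν_d} A^d_j = ∑_k ρ(i,j,k) (A^m_k)^{ν_s} A^s_{i+j−k},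
where R is the standard solution of the σ-DYBE with α(x) = (q−q⁻¹)/(1−x),
β(x) = (q⁻¹−qx)/(1−x), A(e_i) = ∑_a e_a ⊗ K_{ν_a}^{−2i}, and ρ is the Cremmer–Gervais
operator ρ(i,j,k) = q q^{2(i−j)/n}[k=j] + (q−q⁻¹) q^{2(i−k)/n} η(i,j,k) (with
q^{2/n} = t², t an n-th root of q). -/
theorem cremmer_gervais_intertwining (B : Type*) [Field B] (n : ℕ) (hn : 0 < n)
    (q t : B) (hq : q ≠ 0) (hq2 : q ^ 2 ≠ 1) (ht : t ^ n = q)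
    (K : Fin n → B) (hK : ∀ m, K m ≠ 0)
    (hgeneric : ∀ c d : Fin n, arg K q c d ≠ 1) :
    ∀ i j : ℕ, 1 ≤ i → i ≤ n → 1 ≤ j → j ≤ n → ∀ m s : Fin n,
      (∑ c : Fin n, ∑ d : Fin n,
          ((if m = c ∧ s = d then 1 else 0) * ((q - q⁻¹) / (1 - arg K q c d))
              + (if m = d ∧ s = c then 1 else 0) *
                  ((q⁻¹ - q * arg K q d c) / (1 - arg K q d c)))
            * AmapTw K q t c i d * Amap K d j) =
        ∑ k ∈ Finset.Icc (min i j) (max i j),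
          (q * t ^ (2 * ((i : ℤ) - (j : ℤ))) * (if k = j then 1 else 0)
              + (q - q⁻¹) * t ^ (2 * ((i : ℤ) - (k : ℤ))) * ((etaN i j k : ℤ) : B))
            * AmapTw K q t m k s * Amap K s (i + j - k) :=
  cremmer_gervais_intertwining_general B n q t K hK hgeneric
end
end
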